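/- arXiv:1305.6074 — 5 statements merged into one kernel-verified Lean document; each statement's English description precedes it below -/
import Mathlib

section
/- Let Δ be a finite alphabet and φ a substitution mapping each δ ∈ Δ to a language over Σ with ε ∈ φ(δ) for all δ ∈ Δ. Then for every nonempty word w ∈ Δ⁺ and every shortest nonempty word v of φ(w), there exists δ ∈ Δ such that v is a shortest nonempty word of φ(δ). -/
/- A shortest nonempty word `v` of `φ(w)` contains a nonempty factor `a ∈ φ(δ)` for a letter `δ`
of `w`. Since `ε ∈ φ(δ')` for every `δ'`, we have `φ(δ) ⊆ φ(w)`, so minimality forces `a = v`;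
the same inclusion transfers the minimality of `v` from `φ(w)` to `φ(δ)`. -/

open Language

/-- A substitution mapping symbols to languages, extended multiplicatively to words. -/
def phiW {Δ A : Type} (φ : Δ → Language A) (w : List Δ) : Language A :=
  (w.map φ).prod

/-- Image of a language of words under the extended substitution. -/
def phiL {Δ A : Type} (φ : Δ → Language A) (L : Set (List Δ)) : Language A :=
  ⋃ w ∈ L, phiW φ w

/-- The set of languages generated by a generator language `K` and substitution `φ`. -/
def RSet {Δ A : Type} (φ : Δ → Language A) (K : Language Δ) : Set (Language A) :=
  { L | ∃ w ∈ K, phiW φ w = L }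

/-- Rational sets of regular languages. -/
def IsRSRL {A : Type} (R : Set (Language A)) : Prop :=
  ∃ (Δ : Type) (_ : Fintype Δ) (K : Language Δ) (φ : Δ → Language A),
    K.IsRegular ∧ ([] : List Δ) ∉ K ∧ (∀ δ, (φ δ).IsRegular) ∧ R = RSet φ K

/-- The set of shortest nonempty words of a language. -/
def Smin {A : Type} (L : Language A) : Set (List A) :=
  { w | w ∈ L ∧ w ≠ [] ∧ ∀ v ∈ L, v ≠ [] → w.length ≤ v.length }

/- Noncommutative version of `List.single_le_prod`. -/
theorem List.single_le_prod_of_mulMono {M : Type*} [Monoid M] [Preorder M] [MulLeftMono M]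
    [MulRightMono M] {l : List M} (hl : ∀ x ∈ l, 1 ≤ x) : ∀ x ∈ l, x ≤ l.prod := by
  induction l with
  | nil => simp
  | cons hd tl ih =>
    simp only [List.prod_cons, List.forall_mem_cons] at hl ⊢
    exact ⟨le_mul_of_one_le_right' (List.one_le_prod_of_one_le hl.2),
      fun x hx => le_mul_of_one_le_of_le hl.1 (ih hl.2 x hx)⟩

theorem Language.one_le_iff_nil_mem {A : Type*} {L : Language A} : 1 ≤ L ↔ [] ∈ L :=
  Set.singleton_subset_iff

theorem Language.exists_infix_of_mem_list_prod {A : Type*} {Ls : List (Language A)}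
    {v : List A} (hv : v ∈ Ls.prod) (hne : v ≠ []) :
    ∃ L ∈ Ls, ∃ a ∈ L, a ≠ [] ∧ a <:+: v := by
  induction Ls generalizing v with
  | nil => exact absurd hv hne
  | cons L Ls ih =>
    rw [List.prod_cons] at hv
    obtain ⟨a, ha, b, hb, rfl⟩ := Language.mem_mul.1 hv
    by_cases ha_nil : a = []
    · subst ha_nil
      obtain ⟨L', hL', a', ha', ha'ne, hinf⟩ := ih hb (by simpa using hne)
      exact ⟨L', List.mem_cons_of_mem _ hL', a', ha', ha'ne, hinf⟩
    · exact ⟨L, List.mem_cons_self, a, ha, ha_nil, List.infix_append' [] a b⟩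

theorem mem_Smin_of_le {A : Type} {L M : Language A} (hLM : L ≤ M) {v : List A}
    (hv : v ∈ Smin M) (hvL : v ∈ L) : v ∈ Smin L :=
  ⟨hvL, hv.2.1, fun u hu hune => hv.2.2 u (hLM hu) hune⟩

theorem stmt5_general (Δ A : Type) (φ : Δ → Language A)
    (hε : ∀ δ, ([] : List A) ∈ φ δ) (w : List Δ)
    (v : List A) (hv : v ∈ Smin (phiW φ w)) :
    ∃ δ : Δ, v ∈ Smin (φ δ) := by
  have hle : ∀ δ ∈ w, φ δ ≤ phiW φ w := fun δ hδ =>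
    List.single_le_prod_of_mulMono
      (by simpa [Language.one_le_iff_nil_mem] using fun δ _ => hε δ) _ (List.mem_map_of_mem hδ)
  obtain ⟨hvW, hvne, hvmin⟩ := hv
  obtain ⟨_, hL, a, ha, hane, hav⟩ := Language.exists_infix_of_mem_list_prod hvW hvne
  obtain ⟨δ, hδ, rfl⟩ := List.mem_map.1 hL
  obtain rfl : a = v :=
    hav.eq_of_length (le_antisymm hav.length_le (hvmin a (hle δ hδ ha) hane))
  exact ⟨δ, mem_Smin_of_le (hle δ hδ) ⟨hvW, hvne, hvmin⟩ ha⟩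

/-- If `ε ∈ φ(δ)` for all `δ`, then every shortest nonempty word of `φ(w)`
is a shortest nonempty word of some `φ(δ)`. -/
theorem stmt5 (Δ A : Type) [Fintype Δ] (φ : Δ → Language A)
    (hε : ∀ δ, ([] : List A) ∈ φ δ) (w : List Δ) (hw : w ≠ [])
    (v : List A) (hv : v ∈ Smin (phiW φ w)) :
    ∃ δ : Δ, v ∈ Smin (φ δ) :=
  stmt5_general Δ A φ hε w v hv
end

section
/- The set M = { {b} ∪ { aⁱ | 1 ≤ i ≤ n+1 } | n ∈ ℕ } of regular languages over {a,b} is not a rational set of regular languages. -/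
open Language

/-!
Each language `Lₙ = {b} ∪ {aⁱ | 1 ≤ i ≤ n+1}` is indecomposable: its only word containing `b`
is `b` itself, so in a factorisation `Lₙ = X * Y` the word `b` splits as `b · ε` or `ε · b`, and
then the factor holding `ε` can hold nothing else. Hence if `Lₙ = φ(w)`, some letter of `w` is
mapped onto `Lₙ` by `φ`. The `Lₙ` are pairwise distinct, so infinitely many of them would need
distinct letters of the finite alphabet `Δ`.
-/

theorem List.mem_of_prod_eq {M : Type*} [Monoid M] {a : M} (ha : a ≠ 1)
    (h_indec : ∀ x y : M, x * y = a → x = 1 ∨ y = 1) {l : List M} (hl : l.prod = a) : a ∈ l := by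
  induction l with
  | nil => exact absurd hl.symm ha
  | cons x l ih =>
    rw [List.prod_cons] at hl
    rcases h_indec x l.prod hl with rfl | hprod
    · exact List.mem_cons_of_mem _ (ih (by simpa using hl))
    · rw [hprod, mul_one] at hl
      exact hl ▸ List.mem_cons_self

namespace Language

variable {α : Type*} {L X Y : Language α} {b : α}

theorem eq_one_of_nil_mem (hnil : [] ∈ X) (hX : ∀ t ∈ X, t = []) : X = 1 := by
  ext t
  rw [mem_one]
  exact ⟨hX t, fun ht => ht ▸ hnil⟩

theorem ne_one_of_singleton_mem (hb : [b] ∈ L) : L ≠ 1 := by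
  rintro rfl
  simp [mem_one] at hb

theorem eq_one_or_eq_one_of_mul_eq (hb : [b] ∈ L) (hL : ∀ w ∈ L, b ∈ w → w = [b])
    (h : X * Y = L) : X = 1 ∨ Y = 1 := by
  obtain ⟨u, hu, v, hv, huv⟩ := mem_mul.mp (h ▸ hb)
  rcases List.append_eq_singleton_iff.mp huv with ⟨rfl, rfl⟩ | ⟨rfl, rfl⟩
  · refine Or.inl (eq_one_of_nil_mem hu fun t ht => ?_)
    have : t ++ [b] = [b] := hL _ (h ▸ mem_mul.mpr ⟨t, ht, _, hv, rfl⟩) (by simp)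
    simpa using this
  · refine Or.inr (eq_one_of_nil_mem hv fun t ht => ?_)
    have : [b] ++ t = [b] := hL _ (h ▸ mem_mul.mpr ⟨_, hu, t, ht, rfl⟩) (by simp)
    simpa using this

end Language

/-- `{b} ∪ {aⁱ | 1 ≤ i ≤ n+1}` with `a = 0` and `b = 1`. -/
def markedPowers (n : ℕ) : Language (Fin 2) :=
  { w | w = [(1 : Fin 2)] ∨ ∃ i : ℕ, 1 ≤ i ∧ i ≤ n + 1 ∧ w = List.replicate i (0 : Fin 2) }

theorem singleton_one_mem_markedPowers (n : ℕ) : [(1 : Fin 2)] ∈ markedPowers n :=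
  Or.inl rfl

theorem eq_singleton_of_one_mem_of_mem_markedPowers {n : ℕ} {w : List (Fin 2)}
    (hw : w ∈ markedPowers n) (h1 : (1 : Fin 2) ∈ w) : w = [1] := by
  rcases hw with rfl | ⟨i, -, -, rfl⟩
  · rfl
  · exact absurd (List.eq_of_mem_replicate h1) (by decide)

theorem replicate_mem_markedPowers_iff {n m : ℕ} :
    List.replicate (n + 1) (0 : Fin 2) ∈ markedPowers m ↔ n ≤ m := by
  constructor
  · rintro (h | ⟨i, -, hi, h⟩)
    · simp [List.replicate_succ] at h
    · have := congrArg List.length h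
      simp only [List.length_replicate] at this
      omega
  · exact fun h => Or.inr ⟨n + 1, by omega, by omega, rfl⟩

theorem markedPowers_injective : Function.Injective markedPowers := by
  have hle : ∀ {n m}, markedPowers n = markedPowers m → n ≤ m := fun h =>
    replicate_mem_markedPowers_iff.mp (h ▸ replicate_mem_markedPowers_iff.mpr le_rfl)
  exact fun _ _ h => le_antisymm (hle h) (hle h.symm)

theorem exists_eq_markedPowers_of_phiW_eq {Δ : Type} {φ : Δ → Language (Fin 2)} {w : List Δ}
    {n : ℕ} (hw : phiW φ w = markedPowers n) : ∃ δ, φ δ = markedPowers n := by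
  have hmem : markedPowers n ∈ w.map φ :=
    List.mem_of_prod_eq (ne_one_of_singleton_mem (singleton_one_mem_markedPowers n))
      (fun _ _ => eq_one_or_eq_one_of_mul_eq (singleton_one_mem_markedPowers n)
        fun _ => eq_singleton_of_one_mem_of_mem_markedPowers) hw
  obtain ⟨δ, -, hδ⟩ := List.mem_map.mp hmem
  exact ⟨δ, hδ⟩

/-- The set `M = { {b} ∪ {aⁱ | 1 ≤ i ≤ n+1} | n ∈ ℕ }` (with `a = 0`, `b = 1`)
is not an RSRL. -/
theorem stmt8 :
    ¬ IsRSRL { L : Language (Fin 2) | ∃ n : ℕ,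
        L = { w | w = [(1 : Fin 2)] ∨
              ∃ i : ℕ, 1 ≤ i ∧ i ≤ n + 1 ∧ w = List.replicate i (0 : Fin 2) } } := by
  rintro ⟨Δ, _, K, φ, -, -, -, hR⟩
  have h_letter : ∀ n, ∃ δ, φ δ = markedPowers n := by
    intro n
    obtain ⟨w, -, hw⟩ : markedPowers n ∈ RSet φ K := hR ▸ ⟨n, rfl⟩
    exact exists_eq_markedPowers_of_phiW_eq hw
  choose δ hδ using h_letter
  exact not_injective_infinite_finite δ fun n m h =>
    markedPowers_injective (by rw [← hδ n, ← hδ m, h])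
end

section
/- The set { aⁱ | i ≥ 1 } viewed as the RSRL R = { {aⁱ} | i ≥ 1 } has a point-wise Kleene star Ṙ* = { { a^{j·i} | j ≥ 0 } | i ≥ 1 } that is not a rational set of regular languages. -/
/-!
Every member `(aⁱ)∗` of the pointwise star contains `ε`, so in any presentation `(aⁱ)∗ = φ(w)`
each letter `δ` of `w` has `ε ∈ φ δ`, hence `φ δ ⊆ φ(w)`. A shortest nonempty word of `φ(w)`
already has a nonempty factor in a single `φ δ`, so its length is the shortest nonempty length of
that `φ δ`. An RSRL all of whose members contain `ε` therefore has at most `|Δ|` shortest nonempty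
lengths, while `(aⁱ)∗` has shortest nonempty length `i` for every `i ≥ 1`.
-/

open Language Computability

theorem Language.IsRegular.of_finite {α : Type} {L : Language α} (hL : (L : Set (List α)).Finite) :
    L.IsRegular := by
  refine .of_finite_range_leftQuotient ?_
  have hprefixes : {x : List α | ∃ w ∈ L, x <+: w}.Finite :=
    (hL.biUnion fun w _ => w.inits.finite_toSet).subset fun x ⟨w, hw, hx⟩ =>
      Set.mem_biUnion hw ((List.mem_inits x w).mpr hx)
  refine ((hprefixes.image L.leftQuotient).insert 0).subset ?_
  rintro _ ⟨x, rfl⟩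
  by_cases hx : ∃ w ∈ L, x <+: w
  · exact Set.mem_insert_of_mem _ ⟨x, hx, rfl⟩
  · refine Set.mem_insert_iff.mpr (Or.inl (Set.eq_empty_of_forall_notMem fun y hy => ?_))
    exact hx ⟨x ++ y, hy, List.prefix_append x y⟩

section Substitution

variable {Δ A : Type} (φ : Δ → Language A)

lemma phiW_cons (δ : Δ) (w : List Δ) : phiW φ (δ :: w) = φ δ * phiW φ w :=
  List.prod_cons

lemma phiW_const_singleton (a : A) (w : List Δ) :
    phiW (fun _ => {[a]}) w = {List.replicate w.length a} := by
  induction w with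
  | nil => rfl
  | cons δ w ih =>
    rw [phiW_cons, ih]
    ext u
    constructor
    · rintro ⟨_, rfl, _, rfl, rfl⟩
      rfl
    · rintro rfl
      exact ⟨[a], rfl, _, rfl, rfl⟩

lemma nil_mem_of_nil_mem_phiW {w : List Δ} (h : [] ∈ phiW φ w) : ∀ δ ∈ w, [] ∈ φ δ := by
  induction w with
  | nil => simp
  | cons δ w ih =>
    rw [phiW_cons, Language.mem_mul] at h
    obtain ⟨a, ha, b, hb, hab⟩ := h
    obtain ⟨rfl, rfl⟩ := List.append_eq_nil_iff.mp hab
    exact List.forall_mem_cons.mpr ⟨ha, ih hb⟩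

lemma le_phiW_of_nil_mem {w : List Δ} (h : ∀ δ ∈ w, [] ∈ φ δ) {δ : Δ} (hδ : δ ∈ w) :
    φ δ ≤ phiW φ w := by
  have hsub : List.Sublist [φ δ] (w.map φ) := List.singleton_sublist.mpr (List.mem_map_of_mem hδ)
  simpa [phiW] using hsub.prod_le_prod' fun _ hL => by
    obtain ⟨δ', hδ', rfl⟩ := List.mem_map.mp hL
    exact Set.singleton_subset_iff.mpr (h δ' hδ')

lemma exists_nonempty_mem_factor_of_mem_phiW {w : List Δ} {u : List A} (hu : u ∈ phiW φ w)
    (hne : u ≠ []) : ∃ δ ∈ w, ∃ v ∈ φ δ, v ≠ [] ∧ v.length ≤ u.length := by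
  induction w generalizing u with
  | nil => exact absurd hu hne
  | cons δ w ih =>
    rw [phiW_cons, Language.mem_mul] at hu
    obtain ⟨a, ha, b, hb, rfl⟩ := hu
    by_cases hae : a = []
    · subst hae
      obtain ⟨δ', hδ', v, hv, hvne, hvl⟩ := ih hb hne
      exact ⟨δ', List.mem_cons_of_mem δ hδ', v, hv, hvne, hvl⟩
    · exact ⟨δ, List.mem_cons_self, a, ha, hae, by simp⟩

end Substitution

def nonemptyLengths {A : Type} (L : Language A) : Set ℕ :=
  {n | ∃ u ∈ L, u ≠ [] ∧ u.length = n}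

lemma nonemptyLengths_mono {A : Type} {L M : Language A} (h : L ≤ M) :
    nonemptyLengths L ⊆ nonemptyLengths M :=
  fun _ ⟨u, hu, hne, hn⟩ => ⟨u, h hu, hne, hn⟩

lemma isLeast_nonemptyLengths_kstar_singleton {A : Type} {u : List A} (hu : u ≠ []) :
    IsLeast (nonemptyLengths ({u} : Language A)∗) u.length := by
  refine ⟨⟨u, ⟨[u], by simp, fun _ hy => List.mem_singleton.mp hy⟩, hu, rfl⟩, ?_⟩
  rintro _ ⟨v, ⟨S, rfl, hS⟩, hne, rfl⟩
  cases S with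
  | nil => exact absurd rfl hne
  | cons y S =>
    obtain rfl : y = u := hS y List.mem_cons_self
    simp

lemma exists_isLeast_nonemptyLengths_factor {Δ A : Type} (φ : Δ → Language A) {w : List Δ}
    (hnil : [] ∈ phiW φ w) {n : ℕ} (hn : IsLeast (nonemptyLengths (phiW φ w)) n) :
    ∃ δ ∈ w, IsLeast (nonemptyLengths (φ δ)) n := by
  obtain ⟨⟨u, hu, hune, rfl⟩, hlower⟩ := hn
  obtain ⟨δ, hδ, v, hv, hvne, hvu⟩ := exists_nonempty_mem_factor_of_mem_phiW φ hu hune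
  have hsub : nonemptyLengths (φ δ) ⊆ nonemptyLengths (phiW φ w) :=
    nonemptyLengths_mono (le_phiW_of_nil_mem φ (nil_mem_of_nil_mem_phiW φ hnil) hδ)
  have huv : u.length = v.length := le_antisymm (hlower (hsub ⟨v, hv, hvne, rfl⟩)) hvu
  exact ⟨δ, hδ, ⟨v, hv, hvne, huv.symm⟩, fun m hm => hlower (hsub hm)⟩

theorem finite_shortestLengths_RSet {Δ A : Type} [Finite Δ] (φ : Δ → Language A)
    (K : Language Δ) (hnil : ∀ L ∈ RSet φ K, [] ∈ L) :
    {n | ∃ L ∈ RSet φ K, IsLeast (nonemptyLengths L) n}.Finite := by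
  refine (Set.finite_range fun δ => sInf (nonemptyLengths (φ δ))).subset ?_
  rintro n ⟨_, ⟨w, hw, rfl⟩, hn⟩
  obtain ⟨δ, -, hδ⟩ := exists_isLeast_nonemptyLengths_factor φ (hnil _ ⟨w, hw, rfl⟩) hn
  exact ⟨δ, hδ.csInf_eq⟩

theorem isRSRL_replicate_singletons {A : Type} (a : A) :
    IsRSRL {L : Language A | ∃ i : ℕ, 1 ≤ i ∧ L = {List.replicate i a}} := by
  refine ⟨Unit, inferInstance, 1ᶜ, fun _ => {[a]},
    (Language.IsRegular.of_finite (Set.finite_singleton _)).compl, fun h => h rfl,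
    fun _ => .of_finite (Set.finite_singleton _), ?_⟩
  ext L
  simp only [RSet, phiW_const_singleton, Set.mem_ofPred_eq]
  constructor
  · rintro ⟨i, hi, rfl⟩
    exact ⟨List.replicate i (), mt (List.replicate_eq_nil_iff _).mp (by omega), by simp⟩
  · rintro ⟨w, hw, rfl⟩
    exact ⟨w.length, List.length_pos_iff.mpr hw, rfl⟩

/-- The RSRL `R = { {aⁱ} | i ≥ 1 }` has a point-wise Kleene star
`Ṙ* = { (aⁱ)* | i ≥ 1 }` that is not an RSRL. -/
theorem stmt9 :
    IsRSRL { L : Language Unit | ∃ i : ℕ, 1 ≤ i ∧ L = {List.replicate i ()} } ∧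
    ¬ IsRSRL { L' : Language Unit |
        ∃ L ∈ { L : Language Unit | ∃ i : ℕ, 1 ≤ i ∧ L = {List.replicate i ()} },
          L' = L∗ } := by
  refine ⟨isRSRL_replicate_singletons (), ?_⟩
  rintro ⟨Δ, _, K, φ, -, -, -, hR⟩
  have hfinite := finite_shortestLengths_RSet φ K (by
    rw [← hR]
    rintro _ ⟨_, -, rfl⟩
    exact Language.nil_mem_kstar _)
  refine Set.Ici_infinite 1 (hfinite.subset fun i (hi : 1 ≤ i) => ?_)
  rw [← hR]
  refine ⟨_, ⟨_, ⟨i, hi, rfl⟩, rfl⟩, ?_⟩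
  simpa using isLeast_nonemptyLengths_kstar_singleton
    (mt (List.replicate_eq_nil_iff ()).mp (by omega : i ≠ 0))
end

section
/- Let R = (K, φ) with K = L(δδ*) over Δ = {δ} and φ(δ) = {a, b} = Σ, so R = { Σⁱ | i ≥ 1 }. Then the point-wise complement { Σ* \ Σⁱ | i ≥ 1 } is not a rational set of regular languages. -/
/-!
Pumping down a word of `K` whose image contains `ε` can only shrink its image, because the image
of the deleted factor contains `ε` as well. When the images form an antichain the image therefore
does not change, so every member of the rational set is the image of a word shorter than the
pumping constant, and there are only finitely many of those. The complements `Σ* \ Σⁱ` form an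
infinite antichain of languages containing `ε`.
-/

open Language

lemma Language.nil_mem_mul_iff {A : Type*} {l m : Language A} :
    [] ∈ l * m ↔ [] ∈ l ∧ [] ∈ m := by
  simp [mem_mul]

section Substitution

variable {Δ A : Type} (φ : Δ → Language A)

lemma phiW_append (x y : List Δ) : phiW φ (x ++ y) = phiW φ x * phiW φ y := by
  simp [phiW]

lemma phiW_le_of_nil_mem {a b c : List Δ} (h : [] ∈ phiW φ (a ++ b ++ c)) :
    phiW φ (a ++ c) ≤ phiW φ (a ++ b ++ c) := by
  simp only [phiW_append, nil_mem_mul_iff] at h ⊢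
  have hb : 1 ≤ phiW φ b := Set.singleton_subset_iff.2 h.1.2
  calc phiW φ a * phiW φ c = phiW φ a * 1 * phiW φ c := by rw [mul_one]
    _ ≤ phiW φ a * phiW φ b * phiW φ c := by gcongr

theorem exists_short_phiW_eq_of_isAntichain {σ : Type} [Fintype σ] (M : DFA Δ σ)
    (hanti : IsAntichain (· ≤ ·) (RSet φ M.accepts))
    (hnil : ∀ L ∈ RSet φ M.accepts, [] ∈ L) {w : List Δ} (hw : w ∈ M.accepts) :
    ∃ v ∈ M.accepts, v.length < Fintype.card σ ∧ phiW φ v = phiW φ w := by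
  by_cases hlen : w.length < Fintype.card σ
  · exact ⟨w, hw, hlen, rfl⟩
  obtain ⟨a, b, c, hsplit, -, hb, hpump⟩ := M.pumping_lemma hw (not_lt.1 hlen)
  have hpumped : a ++ c ∈ ({a} * KStar.kstar {b} * {c} : Language Δ) := by
    simpa using (append_mem_mul (append_mem_mul rfl (nil_mem_kstar _)) rfl :
      a ++ [] ++ c ∈ ({a} * KStar.kstar {b} * {c} : Language Δ))
  have hac : a ++ c ∈ M.accepts := hpump hpumped
  rw [hsplit] at hw ⊢
  have heq : phiW φ (a ++ c) = phiW φ (a ++ b ++ c) :=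
    hanti.eq ⟨_, hac, rfl⟩ ⟨_, hw, rfl⟩ (phiW_le_of_nil_mem φ (hnil _ ⟨_, hw, rfl⟩))
  obtain ⟨v, hv, hvlen, hveq⟩ := exists_short_phiW_eq_of_isAntichain M hanti hnil hac
  exact ⟨v, hv, hvlen, hveq.trans heq⟩
termination_by w.length
decreasing_by simpa [hsplit] using List.length_pos_iff.2 hb

theorem RSet_finite_of_isAntichain [Finite Δ] {K : Language Δ} (hK : K.IsRegular)
    (hanti : IsAntichain (· ≤ ·) (RSet φ K)) (hnil : ∀ L ∈ RSet φ K, [] ∈ L) :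
    (RSet φ K).Finite := by
  obtain ⟨σ, _, M, rfl⟩ := hK
  refine ((List.finite_length_lt Δ (Fintype.card σ)).image (phiW φ)).subset ?_
  rintro _ ⟨w, hw, rfl⟩
  obtain ⟨v, -, hvlen, hveq⟩ := exists_short_phiW_eq_of_isAntichain φ M hanti hnil hw
  exact ⟨v, hvlen, hveq⟩

end Substitution

lemma compl_setOf_length_eq_le_iff {α : Type*} [Inhabited α] {i j : ℕ} :
    ({ w : List α | w.length = i } : Language α)ᶜ ≤
      ({ w : List α | w.length = j } : Language α)ᶜ ↔ i = j := by
  refine ⟨fun h => ?_, fun h => h ▸ le_rfl⟩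
  by_contra hne
  exact h (a := List.replicate j default) (by simpa using Ne.symm hne) (by simp)

/-- For `R = { Σⁱ | i ≥ 1 }` over `Σ = {a,b}`, the point-wise complement
`{ Σ* \ Σⁱ | i ≥ 1 }` is not an RSRL. -/
theorem stmt11 :
    ¬ IsRSRL { L : Language (Fin 2) | ∃ i : ℕ, 1 ≤ i ∧
        L = ({ w : List (Fin 2) | w.length = i } : Language (Fin 2))ᶜ } := by
  rintro ⟨Δ, _, K, φ, hK, -, -, hR⟩
  have hanti : IsAntichain (· ≤ ·) (RSet φ K) := by
    rw [← hR]
    rintro _ ⟨i, -, rfl⟩ _ ⟨j, -, rfl⟩ hne hle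
    exact hne (by rw [compl_setOf_length_eq_le_iff.1 hle])
  have hnil : ∀ L ∈ RSet φ K, [] ∈ L := by
    rw [← hR]
    rintro _ ⟨i, hi, rfl⟩ (h : 0 = i)
    omega
  have hinf : (RSet φ K).Infinite := by
    rw [← hR]
    refine Set.infinite_of_injective_forall_mem
      (f := fun n : ℕ => ({ w : List (Fin 2) | w.length = n + 1 } : Language (Fin 2))ᶜ)
      (fun m n h => by simpa using compl_setOf_length_eq_le_iff.1 h.le)
      fun n => ⟨n + 1, by omega, rfl⟩
  exact hinf (RSet_finite_of_isAntichain φ hK hanti hnil)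
end

section
/- If R₁ = (K₁, φ) and R₂ are finite RSRLs with the same substitution φ, then R₁ \ R₂ (set difference as sets of languages) is a finite RSRL expressible as (K₃, φ) for K₃ = { w ∈ K₁ | φ(w) ∉ R₂ } ⊆ K₁. -/
/-!
`R₁ \ R₂` is the image under `φ` of `K₃ = { w ∈ K₁ | φ(w) ∉ R₂ }`. The language `K₃` need not be
regular, but `R₁ \ R₂` is finite, so finitely many words of `K₃` already generate it, and a
finite language of generators is regular.
-/

open Language

/- By Myhill–Nerode: every left quotient of `L` is a set of suffixes of words of `L`, and
there are only finitely many such suffixes. -/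
theorem Language.isRegular_of_finite {T : Type} {L : Language T}
    (hL : (L : Set (List T)).Finite) : L.IsRegular := by
  refine IsRegular.of_finite_range_leftQuotient ?_
  have hsuffixes : (⋃ w ∈ (L : Set (List T)), {v | v <:+ w}).Finite :=
    hL.biUnion fun w _ => w.tails.finite_toSet.subset fun v hv => by simpa [List.mem_tails] using hv
  refine hsuffixes.finite_subsets.subset ?_
  rintro _ ⟨x, rfl⟩ y hy
  exact Set.mem_biUnion hy (List.suffix_append x y)

section RSet

variable {Δ A : Type} (φ : Δ → Language A)

theorem RSet_diff (K : Language Δ) (R : Set (Language A)) :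
    RSet φ K \ R = RSet φ ({ w | w ∈ K ∧ phiW φ w ∉ R } : Language Δ) :=
  Set.image_sdiff_preimage.symm

theorem exists_finite_subset_RSet_eq_of_finite {K : Language Δ} (hK : (RSet φ K).Finite) :
    ∃ K' : Language Δ, K' ≤ K ∧ (K' : Set (List Δ)).Finite ∧ RSet φ K' = RSet φ K := by
  obtain ⟨K', hK'K, hbij⟩ := Set.exists_subset_bijOn (K : Set (List Δ)) (phiW φ)
  exact ⟨K', hK'K, Set.Finite.of_finite_image (hbij.image_eq ▸ hK) hbij.injOn, hbij.image_eq⟩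

theorem isRSRL_RSet_of_finite [Fintype Δ] (hφ : ∀ δ, (φ δ).IsRegular) {K : Language Δ}
    (hnil : ([] : List Δ) ∉ K) (hK : (RSet φ K).Finite) : IsRSRL (RSet φ K) := by
  obtain ⟨K', hK'K, hK'fin, hK'⟩ := exists_finite_subset_RSet_eq_of_finite φ hK
  exact ⟨Δ, inferInstance, K', φ, isRegular_of_finite hK'fin, fun h => hnil (hK'K h), hφ,
    hK'.symm⟩

end RSet

theorem stmt16_general (Δ A : Type) [Fintype Δ] (φ : Δ → Language A)
    (hφ : ∀ δ, (φ δ).IsRegular) (K₁ K₂ : Language Δ)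
    (hne₁ : ([] : List Δ) ∉ K₁)
    (hf₁ : (RSet φ K₁).Finite) :
    RSet φ K₁ \ RSet φ K₂ =
      RSet φ ({ w | w ∈ K₁ ∧ phiW φ w ∉ RSet φ K₂ } : Language Δ) ∧
    (RSet φ K₁ \ RSet φ K₂).Finite ∧
    IsRSRL (RSet φ K₁ \ RSet φ K₂) := by
  have hdiff := RSet_diff φ K₁ (RSet φ K₂)
  have hfin : (RSet φ K₁ \ RSet φ K₂).Finite := hf₁.sdiff
  refine ⟨hdiff, hfin, ?_⟩
  rw [hdiff] at hfin ⊢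
  exact isRSRL_RSet_of_finite φ hφ (fun h => hne₁ h.1) hfin

/-- Difference of finite RSRLs over the same substitution: `R₁ \ R₂` equals the
RSRL `(K₃, φ)` with `K₃ = { w ∈ K₁ | φ(w) ∉ R₂ }`, and it is a finite RSRL. -/
theorem stmt16 (Δ A : Type) [Fintype Δ] (φ : Δ → Language A)
    (hφ : ∀ δ, (φ δ).IsRegular) (K₁ K₂ : Language Δ)
    (h₁ : K₁.IsRegular) (h₂ : K₂.IsRegular)
    (hne₁ : ([] : List Δ) ∉ K₁) (hne₂ : ([] : List Δ) ∉ K₂)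
    (hf₁ : (RSet φ K₁).Finite) (hf₂ : (RSet φ K₂).Finite) :
    RSet φ K₁ \ RSet φ K₂ =
      RSet φ ({ w | w ∈ K₁ ∧ phiW φ w ∉ RSet φ K₂ } : Language Δ) ∧
    (RSet φ K₁ \ RSet φ K₂).Finite ∧
    IsRSRL (RSet φ K₁ \ RSet φ K₂) :=
  stmt16_general Δ A φ hφ K₁ K₂ hne₁ hf₁
end
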